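/- arXiv:1203.0261 — 4 statements merged into one kernel-verified Lean document; each statement's English description precedes it below -/
import Mathlib

section
/- Let V be a 4-dimensional real vector space, g a nondegenerate symmetric bilinear form on V with inverse components g̃^{ab} (the inverse of the Gram matrix of g in a fixed basis), and Λ ∈ ℝ. Let R : V×V×V×V → ℝ be multilinear with the symmetries R(u,v,w,z) = −R(v,u,w,z) = −R(u,v,z,w) = R(w,z,u,v), and suppose its Ricci contraction Ric_{ac} := g̃^{bd} R_{abcd} equals Λ g_{ac}. For a symmetric bilinear form γ on V define the curvature contraction (ργ)_{ab} := g̃^{ce} g̃^{df} R_{eabf} γ_{cd}. Then ργ is again a symmetric bilinear form and ρ commutes with trace reversal: the trace reversal of ργ equals ρ applied to the trace reversal of γ, i.e. (ργ) − (1/2)(tr_g ργ)·g = ρ(γ − (1/2)(tr_g γ)·g). -/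
/-!
In the basis `B`, raise both indices of `γ` with `g̃`: for `N := g̃ᵀ γ g̃` the contraction reads
`(ργ)_{ab} = N^{ef} R_{eabf}`. The pair symmetry `R_{eabf} = R_{fbae}` makes `ργ` symmetric
whenever `γ` is. Contracting `g̃` against either pair of slots of `R` yields the Ricci tensor, so
the Einstein condition gives `ρ g = -Λ g` and `tr_g (ργ) = -Λ tr_g γ`; both sides of the identity
are then `ργ + (Λ/2) (tr_g γ) g`.
-/

open Finset Matrix

lemma Fintype.sum_comm_pairs {α β γ δ M : Type*} [Fintype α] [Fintype β] [Fintype γ]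
    [Fintype δ] [AddCommMonoid M] (F : α → β → γ → δ → M) :
    ∑ a, ∑ b, ∑ c, ∑ d, F a b c d = ∑ c, ∑ d, ∑ a, ∑ b, F a b c d := by
  have h : ∑ p : α × β, ∑ q : γ × δ, F p.1 p.2 q.1 q.2
      = ∑ q : γ × δ, ∑ p : α × β, F p.1 p.2 q.1 q.2 := Finset.sum_comm
  simpa only [Fintype.sum_prod_type] using h

section Components

variable {ι : Type*} [Fintype ι]

def curvaturePairing (R : ι → ι → ι → ι → ℝ) : Matrix ι ι ℝ →ₗ[ℝ] Matrix ι ι ℝ where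
  toFun N := of fun a b => ∑ e, ∑ f, N e f * R e a b f
  map_add' N M := by ext; simp [add_mul, sum_add_distrib]
  map_smul' t N := by ext; simp [mul_sum, mul_assoc]

@[simp]
lemma curvaturePairing_apply (R : ι → ι → ι → ι → ℝ) (N : Matrix ι ι ℝ) (a b : ι) :
    curvaturePairing R N a b = ∑ e, ∑ f, N e f * R e a b f := rfl

def ricciContraction (R : ι → ι → ι → ι → ℝ) (P : Matrix ι ι ℝ) : Matrix ι ι ℝ :=
  of fun a c => ∑ b, ∑ d, P b d * R a b c d

@[simp]
lemma ricciContraction_apply (R : ι → ι → ι → ι → ℝ) (P : Matrix ι ι ℝ) (a c : ι) :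
    ricciContraction R P a c = ∑ b, ∑ d, P b d * R a b c d := rfl

lemma curvaturePairing_transpose_mul_mul_apply (R : ι → ι → ι → ι → ℝ) (P D : Matrix ι ι ℝ)
    (a b : ι) :
    curvaturePairing R (Pᵀ * D * P) a b
      = ∑ c, ∑ e, ∑ d, ∑ f, P c e * P d f * R e a b f * D c d := by
  simp only [curvaturePairing_apply, mul_apply, transpose_apply, sum_mul]
  rw [Fintype.sum_comm_pairs, sum_comm]
  refine sum_congr rfl fun c _ => ?_
  rw [sum_comm]
  refine sum_congr rfl fun e _ => sum_congr rfl fun d _ => sum_congr rfl fun f _ => ?_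
  ring

variable {R : ι → ι → ι → ι → ℝ}

lemma curvaturePairing_isSymm (hR_anti : ∀ a b c d, R a b c d = -R a b d c)
    (hR_pair : ∀ a b c d, R a b c d = R c d a b) {N : Matrix ι ι ℝ} (hN : N.IsSymm) :
    (curvaturePairing R N).IsSymm := by
  ext a b
  rw [transpose_apply, curvaturePairing_apply, curvaturePairing_apply, sum_comm]
  refine sum_congr rfl fun f _ => sum_congr rfl fun e _ => ?_
  rw [hN.apply f e, hR_anti, hR_pair, hR_anti, neg_neg]

lemma curvaturePairing_eq_neg_transpose_ricciContraction
    (hR_anti : ∀ a b c d, R a b c d = -R a b d c)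
    (hR_pair : ∀ a b c d, R a b c d = R c d a b) (P : Matrix ι ι ℝ) :
    curvaturePairing R P = -(ricciContraction R Pᵀ)ᵀ := by
  ext a b
  simp only [curvaturePairing_apply, Matrix.neg_apply, transpose_apply, ricciContraction_apply,
    ← sum_neg_distrib]
  rw [sum_comm]
  refine sum_congr rfl fun f _ => sum_congr rfl fun e _ => ?_
  rw [hR_pair, hR_anti, mul_neg]

lemma trace_mul_curvaturePairing (hR_anti : ∀ a b c d, R a b c d = -R a b d c)
    (P N : Matrix ι ι ℝ) :
    trace (P * curvaturePairing R N) = -trace (N * (ricciContraction R Pᵀ)ᵀ) := by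
  simp only [trace, Matrix.diag, mul_apply, curvaturePairing_apply, transpose_apply,
    ricciContraction_apply, mul_sum, ← sum_neg_distrib]
  rw [Fintype.sum_comm_pairs]
  refine sum_congr rfl fun e _ => sum_congr rfl fun f _ => ?_
  rw [sum_comm]
  refine sum_congr rfl fun b _ => sum_congr rfl fun a _ => ?_
  rw [hR_anti]
  ring

end Components

lemma Matrix.IsSymm.transpose_mul_mul {ι α : Type*} [Fintype ι] [CommSemiring α]
    {D : Matrix ι ι α} (hD : D.IsSymm) (P : Matrix ι ι α) : (Pᵀ * D * P).IsSymm := by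
  rw [IsSymm, transpose_mul, transpose_mul, transpose_transpose, hD.eq, Matrix.mul_assoc]

section Einstein

variable {ι : Type*} [Fintype ι] [DecidableEq ι] {R : ι → ι → ι → ι → ℝ}
  {G : Matrix ι ι ℝ} {Λ : ℝ}

lemma curvaturePairing_inv_gram (hR_anti : ∀ a b c d, R a b c d = -R a b d c)
    (hR_pair : ∀ a b c d, R a b c d = R c d a b) (hG : G.IsSymm) (hdet : IsUnit G.det)
    (hRic : ricciContraction R G⁻¹ = Λ • G) :
    curvaturePairing R (G⁻¹ᵀ * G * G⁻¹) = -Λ • G := by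
  rw [transpose_nonsing_inv, hG.eq, nonsing_inv_mul _ hdet, Matrix.one_mul,
    curvaturePairing_eq_neg_transpose_ricciContraction hR_anti hR_pair, transpose_nonsing_inv,
    hG.eq, hRic, transpose_smul, hG.eq, neg_smul]

lemma trace_inv_mul_curvaturePairing (hR_anti : ∀ a b c d, R a b c d = -R a b d c)
    (hG : G.IsSymm) (hdet : IsUnit G.det) (hRic : ricciContraction R G⁻¹ = Λ • G)
    (D : Matrix ι ι ℝ) :
    trace (G⁻¹ * curvaturePairing R (G⁻¹ᵀ * D * G⁻¹)) = -Λ * trace (G⁻¹ * D) := by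
  rw [trace_mul_curvaturePairing hR_anti, transpose_nonsing_inv, hG.eq, hRic, transpose_smul,
    hG.eq, Matrix.mul_smul, trace_smul, Matrix.mul_assoc, nonsing_inv_mul _ hdet,
    Matrix.mul_one, trace_mul_comm, smul_eq_mul, neg_mul]

end Einstein

lemma LinearMap.trace_eq_trace_inv_toMatrix₂_mul {K V ι : Type*} [CommRing K] [AddCommGroup V]
    [Module K V] [Fintype ι] [DecidableEq ι] (B : Module.Basis ι K V)
    {g δ : V →ₗ[K] V →ₗ[K] K} {S : V →ₗ[K] V} (hdet : IsUnit (toMatrix₂ B B g).det)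
    (hS : ∀ u v, δ u v = g u (S v)) :
    trace K V S = Matrix.trace ((toMatrix₂ B B g)⁻¹ * toMatrix₂ B B δ) := by
  have hδ : δ = g.compl₂ S := by ext u v; exact hS u v
  rw [hδ, toMatrix₂_compl₂ B B, ← Matrix.mul_assoc, nonsing_inv_mul _ hdet, Matrix.one_mul,
    trace_eq_matrix_trace K B]

theorem stmt_1_general
    {V : Type} [AddCommGroup V] [Module ℝ V]
    (B : Module.Basis (Fin 4) ℝ V)
    (g : V →ₗ[ℝ] V →ₗ[ℝ] ℝ)
    (hg_symm : ∀ u v : V, g u v = g v u)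
    (hg_nondeg : ∀ v : V, (∀ u : V, g u v = 0) → v = 0)
    -- g̃ : the inverse of the Gram matrix of g in the basis B
    (gi : Matrix (Fin 4) (Fin 4) ℝ)
    (hgi : gi = (Matrix.of fun a b => g (B a) (B b))⁻¹)
    (Λ : ℝ)
    -- R : V×V×V×V → ℝ multilinear, with the symmetries of a curvature tensor
    (R : V →ₗ[ℝ] V →ₗ[ℝ] V →ₗ[ℝ] V →ₗ[ℝ] ℝ)
    (hR2 : ∀ u v w z : V, R u v w z = - R u v z w)
    (hR3 : ∀ u v w z : V, R u v w z = R w z u v)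
    -- Ricci contraction Ric_{ac} = g̃^{bd} R_{abcd} equals Λ g_{ac}
    (hRic : ∀ a c : Fin 4,
      (∑ b, ∑ d, gi b d * R (B a) (B b) (B c) (B d)) = Λ * g (B a) (B c))
    (γ : V →ₗ[ℝ] V →ₗ[ℝ] ℝ)
    (hγ_symm : ∀ u v : V, γ u v = γ v u)
    -- the curvature contraction ρ, characterized in components:
    (ρ : (V →ₗ[ℝ] V →ₗ[ℝ] ℝ) → (V →ₗ[ℝ] V →ₗ[ℝ] ℝ))
    (hρ : ∀ (δ : V →ₗ[ℝ] V →ₗ[ℝ] ℝ) (a b : Fin 4),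
      ρ δ (B a) (B b)
        = ∑ c, ∑ e, ∑ d, ∑ f, gi c e * gi d f * R (B e) (B a) (B b) (B f) * δ (B c) (B d))
    -- T represents γ, T' represents ργ (unique since g is nondegenerate)
    (T T' : V →ₗ[ℝ] V)
    (hT : ∀ u v : V, γ u v = g u (T v))
    (hT' : ∀ u v : V, ρ γ u v = g u (T' v)) :
    -- ργ is again a symmetric bilinear form …
    (∀ u v : V, ρ γ u v = ρ γ v u) ∧
    -- … and ρ commutes with trace reversal
    ρ γ - ((1/2) * LinearMap.trace ℝ V T') • g
      = ρ (γ - ((1/2) * LinearMap.trace ℝ V T) • g) := by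
  set G := LinearMap.toMatrix₂ B B g
  rw [show (Matrix.of fun a b => g (B a) (B b)) = G by ext; simp [G]] at hgi
  subst hgi
  set Rc : Fin 4 → Fin 4 → Fin 4 → Fin 4 → ℝ := fun a b c d => R (B a) (B b) (B c) (B d)
  have hR_anti (a b c d : Fin 4) : Rc a b c d = -Rc a b d c := hR2 _ _ _ _
  have hR_pair (a b c d : Fin 4) : Rc a b c d = Rc c d a b := hR3 _ _ _ _
  have hG : G.IsSymm := IsSymm.ext fun a b => by simp [G, hg_symm]
  have hdet : IsUnit G.det :=
    isUnit_iff_ne_zero.2 ((LinearMap.separatingRight_iff_det_ne_zero B).1 hg_nondeg)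
  have hRicc : ricciContraction Rc G⁻¹ = Λ • G := by ext a c; simp [hRic, Rc, G]
  have hρG (δ : V →ₗ[ℝ] V →ₗ[ℝ] ℝ) :
      LinearMap.toMatrix₂ B B (ρ δ)
        = curvaturePairing Rc (G⁻¹ᵀ * LinearMap.toMatrix₂ B B δ * G⁻¹) := by
    ext a b
    rw [LinearMap.toMatrix₂_apply, curvaturePairing_transpose_mul_mul_apply, hρ]
    simp [Rc]
  have hγ : (LinearMap.toMatrix₂ B B γ).IsSymm := IsSymm.ext fun a b => by simp [hγ_symm]
  have htrace : LinearMap.trace ℝ V T' = -Λ * LinearMap.trace ℝ V T := by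
    rw [LinearMap.trace_eq_trace_inv_toMatrix₂_mul B hdet hT',
      LinearMap.trace_eq_trace_inv_toMatrix₂_mul B hdet hT, hρG,
      trace_inv_mul_curvaturePairing hR_anti hG hdet hRicc]
  refine ⟨fun u v => ((LinearMap.BilinForm.isSymm_iff_basis B).2 fun a b => ?_).eq u v, ?_⟩
  · have := (curvaturePairing_isSymm hR_anti hR_pair (hγ.transpose_mul_mul G⁻¹)).apply a b
    rwa [← hρG, LinearMap.toMatrix₂_apply, LinearMap.toMatrix₂_apply, eq_comm] at this
  · apply (LinearMap.toMatrix₂ B B).injective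
    have toMatrix₂_sub_smul (δ : V →ₗ[ℝ] V →ₗ[ℝ] ℝ) (t : ℝ) :
        LinearMap.toMatrix₂ B B (δ - t • g) = LinearMap.toMatrix₂ B B δ - t • G := by
      ext; simp [G]
    rw [toMatrix₂_sub_smul, hρG, hρG, toMatrix₂_sub_smul, Matrix.mul_sub, Matrix.sub_mul,
      Matrix.mul_smul, Matrix.smul_mul, map_sub, map_smul,
      curvaturePairing_inv_gram hR_anti hR_pair hG hdet hRicc, htrace]
    module

theorem stmt_1
    {V : Type} [AddCommGroup V] [Module ℝ V] [FiniteDimensional ℝ V]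
    (hdim : Module.finrank ℝ V = 4)
    (B : Module.Basis (Fin 4) ℝ V)
    (g : V →ₗ[ℝ] V →ₗ[ℝ] ℝ)
    (hg_symm : ∀ u v : V, g u v = g v u)
    (hg_nondeg : ∀ v : V, (∀ u : V, g u v = 0) → v = 0)
    -- g̃ : the inverse of the Gram matrix of g in the basis B
    (gi : Matrix (Fin 4) (Fin 4) ℝ)
    (hgi : gi = (Matrix.of fun a b => g (B a) (B b))⁻¹)
    (Λ : ℝ)
    -- R : V×V×V×V → ℝ multilinear, with the symmetries of a curvature tensor
    (R : V →ₗ[ℝ] V →ₗ[ℝ] V →ₗ[ℝ] V →ₗ[ℝ] ℝ)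
    (hR1 : ∀ u v w z : V, R u v w z = - R v u w z)
    (hR2 : ∀ u v w z : V, R u v w z = - R u v z w)
    (hR3 : ∀ u v w z : V, R u v w z = R w z u v)
    -- Ricci contraction Ric_{ac} = g̃^{bd} R_{abcd} equals Λ g_{ac}
    (hRic : ∀ a c : Fin 4,
      (∑ b, ∑ d, gi b d * R (B a) (B b) (B c) (B d)) = Λ * g (B a) (B c))
    (γ : V →ₗ[ℝ] V →ₗ[ℝ] ℝ)
    (hγ_symm : ∀ u v : V, γ u v = γ v u)
    -- the curvature contraction ρ, characterized in components:
    (ρ : (V →ₗ[ℝ] V →ₗ[ℝ] ℝ) → (V →ₗ[ℝ] V →ₗ[ℝ] ℝ))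
    (hρ : ∀ (δ : V →ₗ[ℝ] V →ₗ[ℝ] ℝ) (a b : Fin 4),
      ρ δ (B a) (B b)
        = ∑ c, ∑ e, ∑ d, ∑ f, gi c e * gi d f * R (B e) (B a) (B b) (B f) * δ (B c) (B d))
    -- T represents γ, T' represents ργ (unique since g is nondegenerate)
    (T T' : V →ₗ[ℝ] V)
    (hT : ∀ u v : V, γ u v = g u (T v))
    (hT' : ∀ u v : V, ρ γ u v = g u (T' v)) :
    -- ργ is again a symmetric bilinear form …
    (∀ u v : V, ρ γ u v = ρ γ v u) ∧
    -- … and ρ commutes with trace reversal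
    ρ γ - ((1/2) * LinearMap.trace ℝ V T') • g
      = ρ (γ - ((1/2) * LinearMap.trace ℝ V T) • g) :=
  stmt_1_general B g hg_symm hg_nondeg gi hgi Λ R hR2 hR3 hRic γ hγ_symm ρ hρ T T' hT hT'
end

section
/- For every smooth symmetric tensor field γ on Minkowski space satisfying the de Donder condition ∂^a γ̄_{ab} = 0 (vanishing divergence of the trace reversal), one has 2 L_{ab}(γ) = −□ γ̄_{ab}; consequently L_{ab}(γ) = 0 for all a,b if and only if □ γ_{ab} = 0 for all a,b. -/
noncomputable section

/-- The Minkowski metric η = diag(−1,1,1,1) in components (it is its own inverse,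
so `eta` also serves as η^{ab}). -/
def eta (a b : Fin 4) : ℝ := if a = b then (if a = 0 then -1 else 1) else 0

/-- The coordinate partial derivative ∂_a of a scalar function on ℝ⁴. -/
def pd (a : Fin 4) (f : (Fin 4 → ℝ) → ℝ) : (Fin 4 → ℝ) → ℝ :=
  fun x => fderiv ℝ f x (Pi.single a 1)

/-- The raised-index derivative ∂^a = η^{ab} ∂_b. -/
def pdUp (a : Fin 4) (f : (Fin 4 → ℝ) → ℝ) : (Fin 4 → ℝ) → ℝ :=
  fun x => ∑ b, eta a b * pd b f x

/-- A tensor field on Minkowski space: components `γ a b`, each a scalar function on ℝ⁴. -/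
abbrev Tensor := Fin 4 → Fin 4 → (Fin 4 → ℝ) → ℝ

/-- The trace γ = η^{ab} γ_{ab}. -/
def trT (γ : Tensor) : (Fin 4 → ℝ) → ℝ := fun x => ∑ a, ∑ b, eta a b * γ a b x

/-- The wave operator □ = η^{ab} ∂_a ∂_b. -/
def box (f : (Fin 4 → ℝ) → ℝ) : (Fin 4 → ℝ) → ℝ :=
  fun x => ∑ a, ∑ b, eta a b * pd a (pd b f) x

/-- The trace reversal γ̄_{ab} = γ_{ab} − (1/2) η_{ab} γ. -/
def trRev (γ : Tensor) : Tensor :=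
  fun a b x => γ a b x - (1/2) * eta a b * trT γ x

/-- The flat linearized Einstein operator (Λ = 0):
L_{ab}(γ) = −(1/2)η_{ab}(∂^c∂^d γ_{cd} − □γ) − (1/2)□γ_{ab} − (1/2)∂_a∂_b γ
            + (1/2)∂^c∂_a γ_{bc} + (1/2)∂^c∂_b γ_{ac}. -/
def linE (γ : Tensor) : Tensor := fun a b x =>
  -(1/2) * eta a b * ((∑ c, ∑ d, pdUp c (pdUp d (γ c d)) x) - box (trT γ) x)
  - (1/2) * box (γ a b) x - (1/2) * pd a (pd b (trT γ)) x
  + (1/2) * ∑ c, pdUp c (pd a (γ b c)) x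
  + (1/2) * ∑ c, pdUp c (pd b (γ a c)) x

/-- The divergence of the trace reversal, v_b := ∂^a γ̄_{ab}. -/
def divTrRev (γ : Tensor) (b : Fin 4) : (Fin 4 → ℝ) → ℝ :=
  fun x => ∑ a, pdUp a (trRev γ a b) x

/-!
STATEMENT 3: for every smooth symmetric tensor field γ on Minkowski space satisfying the
de Donder condition ∂^a γ̄_{ab} = 0, one has 2 L_{ab}(γ) = −□ γ̄_{ab}; consequently
L_{ab}(γ) = 0 for all a,b iff □ γ_{ab} = 0 for all a,b.
-/

namespace Stmt3Aux

abbrev V4 := Fin 4 → ℝ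

lemma pd_congr {f g : V4 → ℝ} (h : ∀ y, f y = g y) (a : Fin 4) (x : V4) :
    pd a f x = pd a g x := by
  have : f = g := funext h
  rw [this]

lemma pd_sub {f g : V4 → ℝ} (hf : Differentiable ℝ f) (hg : Differentiable ℝ g)
    (a : Fin 4) (x : V4) :
    pd a (fun y => f y - g y) x = pd a f x - pd a g x := by
  unfold pd; rw [fderiv_fun_sub (hf x) (hg x)]; simp

lemma pd_const_mul (c : ℝ) {f : V4 → ℝ} (hf : Differentiable ℝ f) (a : Fin 4) (x : V4) :
    pd a (fun y => c * f y) x = c * pd a f x := by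
  unfold pd; rw [fderiv_const_mul (hf x) c]; simp

lemma pd_sum {ι : Type*} (s : Finset ι) {f : ι → V4 → ℝ} (hf : ∀ i, Differentiable ℝ (f i))
    (a : Fin 4) (x : V4) :
    pd a (fun y => ∑ i ∈ s, f i y) x = ∑ i ∈ s, pd a (f i) x := by
  unfold pd; rw [fderiv_fun_sum (fun i _ => hf i x)]; simp

lemma pd_contDiff' {m n : ℕ} {f : V4 → ℝ} (hf : ContDiff ℝ (m : ℕ) f) (h : n + 1 ≤ m)
    (a : Fin 4) : ContDiff ℝ (n : ℕ) (pd a f) := by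
  have h2 : ContDiff ℝ (n : ℕ) (fderiv ℝ f) := hf.fderiv_right (by exact_mod_cast h)
  exact h2.clm_apply contDiff_const

lemma diff_of_cd {n : ℕ} {f : V4 → ℝ} (h : ContDiff ℝ (n : ℕ) f) (hn : 1 ≤ n) :
    Differentiable ℝ f := h.differentiable (by exact_mod_cast (by omega : n ≠ 0))

lemma pd_diff {f : V4 → ℝ} (hf : ContDiff ℝ (2 : ℕ) f) (a : Fin 4) :
    Differentiable ℝ (pd a f) :=
  diff_of_cd (pd_contDiff' hf (by norm_num) a) le_rfl

lemma pd_comm {f : V4 → ℝ} (hf : ContDiff ℝ (2:ℕ) f) (a b : Fin 4) (x : V4) :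
    pd a (pd b f) x = pd b (pd a f) x := by
  have hdf : DifferentiableAt ℝ (fderiv ℝ f) x :=
    ((hf.fderiv_right (m := 1) (by exact_mod_cast le_rfl)).differentiable one_ne_zero) x
  have h2 : ∀ v : V4, fderiv ℝ (fun y => fderiv ℝ f y v) x
      = (fderiv ℝ (fderiv ℝ f) x).flip v := by
    intro v
    have h := fderiv_clm_apply (c := fderiv ℝ f) (u := fun _ => v) hdf (differentiableAt_const v)
    simpa using h
  have hsym := (hf.contDiffAt (x := x)).isSymmSndFDerivAt (n := 2) (by simp [minSmoothness_of_isRCLikeNormedField])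
  unfold pd
  rw [h2, h2]
  exact hsym _ _

lemma pdUp_congr {f g : V4 → ℝ} (h : ∀ y, f y = g y) (a : Fin 4) (x : V4) :
    pdUp a f x = pdUp a g x := by
  unfold pdUp
  exact Finset.sum_congr rfl fun b _ => by rw [pd_congr h]

lemma pdUp_sum {ι : Type*} (s : Finset ι) {f : ι → V4 → ℝ}
    (hf : ∀ i, Differentiable ℝ (f i)) (a : Fin 4) (x : V4) :
    pdUp a (fun y => ∑ i ∈ s, f i y) x = ∑ i ∈ s, pdUp a (f i) x := by
  unfold pdUp
  calc ∑ b, eta a b * pd b (fun y => ∑ i ∈ s, f i y) x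
      = ∑ b, ∑ i ∈ s, eta a b * pd b (f i) x := by
        refine Finset.sum_congr rfl fun b _ => ?_
        rw [pd_sum s hf b x, Finset.mul_sum]
    _ = ∑ i ∈ s, ∑ b, eta a b * pd b (f i) x := Finset.sum_comm

lemma pdUp_const_mul (c : ℝ) {f : V4 → ℝ} (hf : Differentiable ℝ f) (a : Fin 4) (x : V4) :
    pdUp a (fun y => c * f y) x = c * pdUp a f x := by
  unfold pdUp
  rw [Finset.mul_sum]
  refine Finset.sum_congr rfl fun b _ => ?_
  rw [pd_const_mul c hf b x]; ring

lemma pdUp_contDiff' {m n : ℕ} {f : V4 → ℝ} (hf : ContDiff ℝ (m : ℕ) f) (h : n + 1 ≤ m)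
    (a : Fin 4) : ContDiff ℝ (n : ℕ) (pdUp a f) := by
  unfold pdUp
  exact ContDiff.sum fun b _ => contDiff_const.mul (pd_contDiff' hf h b)

lemma pd_pdUp_comm {f : V4 → ℝ} (hf : ContDiff ℝ (2:ℕ) f) (a c : Fin 4) (x : V4) :
    pd a (pdUp c f) x = pdUp c (pd a f) x := by
  have h1 : pd a (pdUp c f) x = pd a (fun y => ∑ b, eta c b * pd b f y) x := rfl
  rw [h1, pd_sum Finset.univ (fun b => diff_of_cd (contDiff_const.mul
      (pd_contDiff' (n := 1) hf (by norm_num) b)) le_rfl) a x]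
  unfold pdUp
  refine Finset.sum_congr rfl fun b _ => ?_
  rw [pd_const_mul (eta c b) (pd_diff hf b) a x, pd_comm hf a b x]

section Gamma

variable (γ : Tensor) (hc : ∀ a b, ContDiff ℝ (3:ℕ) (γ a b))

include hc

lemma trT_cd : ContDiff ℝ (3:ℕ) (trT γ) := by
  unfold trT
  exact ContDiff.sum fun a _ => ContDiff.sum fun b _ => contDiff_const.mul (hc a b)

lemma gamma_cd2 (a b : Fin 4) : ContDiff ℝ (2:ℕ) (γ a b) :=
  (hc a b).of_le (by exact_mod_cast (by norm_num : (2:ℕ) ≤ 3))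

lemma trT_cd2 : ContDiff ℝ (2:ℕ) (trT γ) :=
  (trT_cd γ hc).of_le (by exact_mod_cast (by norm_num : (2:ℕ) ≤ 3))

lemma keyK (hsymm : ∀ a b x, γ a b x = γ b a x)
    (hdD : ∀ b x, divTrRev γ b x = 0) (b : Fin 4) (x : V4) :
    ∑ a, pdUp a (γ a b) x = (1/2) * pd b (trT γ) x := by
  have hT : Differentiable ℝ (trT γ) := diff_of_cd (trT_cd γ hc) (by norm_num)
  have h0 := hdD b x
  unfold divTrRev at h0
  have e1 : ∀ a, pdUp a (trRev γ a b) x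
      = pdUp a (γ a b) x - (1/2) * eta a b * pdUp a (trT γ) x := by
    intro a
    have hg : ∀ y, trRev γ a b y = γ a b y - (1/2 * eta a b) * trT γ y := by
      intro y; unfold trRev; ring
    rw [pdUp_congr hg a x]
    have h2 : pdUp a (fun y => γ a b y - (1/2 * eta a b) * trT γ y) x
        = pdUp a (γ a b) x - (1/2 * eta a b) * pdUp a (trT γ) x := by
      unfold pdUp
      rw [Finset.mul_sum, ← Finset.sum_sub_distrib]
      refine Finset.sum_congr rfl fun c _ => ?_
      rw [pd_sub (diff_of_cd (hc a b) (by norm_num))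
        ((contDiff_const.mul (trT_cd γ hc)).differentiable (by norm_num)) c x,
        pd_const_mul (1/2 * eta a b) hT c x]
      ring
    rw [h2]
  -- rewrite h0
  rw [Finset.sum_congr rfl (fun a _ => e1 a)] at h0
  -- now h0 : ∑ a, (pdUp a (γ a b) x - 1/2*eta a b*pdUp a (trT γ) x) = 0
  -- expand pdUp (trT γ) into pd's and crunch indices
  have e2 : ∑ a, (1/2) * eta a b * pdUp a (trT γ) x = (1/2) * pd b (trT γ) x := by
    unfold pdUp
    simp only [Fin.sum_univ_four, eta]
    fin_cases b <;> simp <;> ring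
  rw [Finset.sum_sub_distrib] at h0
  have := e2
  linarith [h0, e2]

lemma keyT2 (hsymm : ∀ a b x, γ a b x = γ b a x)
    (hdD : ∀ b x, divTrRev γ b x = 0) (a b : Fin 4) (x : V4) :
    ∑ c, pdUp c (pd a (γ b c)) x = (1/2) * pd a (pd b (trT γ)) x := by
  have h1 : ∀ c, pdUp c (pd a (γ b c)) x = pd a (pdUp c (γ b c)) x :=
    fun c => (pd_pdUp_comm (gamma_cd2 γ hc b c) a c x).symm
  rw [Finset.sum_congr rfl fun c _ => h1 c]
  rw [← pd_sum Finset.univ (fun c => diff_of_cd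
    (pdUp_contDiff' (n := 2) (hc b c) (by norm_num) c) (by norm_num)) a x]
  rw [pd_congr (g := fun y => (1/2) * pd b (trT γ) y) ?hK a x]
  · exact pd_const_mul (1/2) (pd_diff (trT_cd2 γ hc) b) a x
  case hK =>
    intro y
    beta_reduce
    rw [← keyK γ hc hsymm hdD b y]
    exact Finset.sum_congr rfl fun c _ => pdUp_congr (fun z => hsymm b c z) c y

lemma keyT1 (hsymm : ∀ a b x, γ a b x = γ b a x)
    (hdD : ∀ b x, divTrRev γ b x = 0) (x : V4) :
    ∑ c, ∑ d, pdUp c (pdUp d (γ c d)) x = (1/2) * box (trT γ) x := by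
  have h1 : ∀ c, ∑ d, pdUp c (pdUp d (γ c d)) x = (1/2) * pdUp c (pd c (trT γ)) x := by
    intro c
    rw [← pdUp_sum Finset.univ (fun d => diff_of_cd
      (pdUp_contDiff' (n := 2) (hc c d) (by norm_num) d) (by norm_num)) c x]
    rw [pdUp_congr (g := fun y => (1/2) * pd c (trT γ) y) ?hK c x]
    · exact pdUp_const_mul (1/2) (pd_diff (trT_cd2 γ hc) c) c x
    case hK =>
      intro y
      beta_reduce
      rw [← keyK γ hc hsymm hdD c y]
      exact Finset.sum_congr rfl fun d _ => pdUp_congr (fun z => hsymm c d z) d y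
  rw [Finset.sum_congr rfl fun c _ => h1 c, ← Finset.mul_sum]
  congr 1
  unfold pdUp box
  exact Finset.sum_congr rfl fun c _ => Finset.sum_congr rfl fun e _ => by
    rw [pd_comm (trT_cd2 γ hc) e c x]

omit hc in
lemma box_congr {f g : V4 → ℝ} (h : ∀ y, f y = g y) (x : V4) : box f x = box g x := by
  have : f = g := funext h
  rw [this]

omit hc in
lemma box_sub_const_mul {f h : V4 → ℝ} (hf : ContDiff ℝ (2:ℕ) f) (hh : ContDiff ℝ (2:ℕ) h)
    (k : ℝ) (x : V4) :
    box (fun y => f y - k * h y) x = box f x - k * box h x := by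
  have hp : ∀ d y, pd d (fun y => f y - k * h y) y = pd d f y - k * pd d h y := by
    intro d y
    rw [pd_sub (diff_of_cd hf (by norm_num)) (diff_of_cd (contDiff_const.mul hh) (by norm_num)) d y,
        pd_const_mul k (diff_of_cd hh (by norm_num)) d y]
  unfold box
  rw [Finset.mul_sum, ← Finset.sum_sub_distrib]
  refine Finset.sum_congr rfl fun c _ => ?_
  rw [Finset.mul_sum, ← Finset.sum_sub_distrib]
  refine Finset.sum_congr rfl fun d _ => ?_
  rw [pd_congr (hp d) c x,
      pd_sub (pd_diff hf d) (diff_of_cd (contDiff_const.mul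
        (pd_contDiff' (n := 1) hh (by norm_num) d)) le_rfl) c x,
      pd_const_mul k (pd_diff hh d) c x]
  ring

lemma boxTrRev_eq (a b : Fin 4) (x : V4) :
    box (trRev γ a b) x = box (γ a b) x - (1/2) * eta a b * box (trT γ) x := by
  have h : ∀ y, trRev γ a b y = γ a b y - (1/2 * eta a b) * trT γ y := fun y => by
    unfold trRev; ring
  rw [box_congr h x, box_sub_const_mul (gamma_cd2 γ hc a b) (trT_cd2 γ hc) _ x]

lemma box_trT (x : V4) : box (trT γ) x = ∑ i, ∑ j, eta i j * box (γ i j) x := by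
  have hdixy : ∀ i, Differentiable ℝ (fun y => ∑ j, eta i j * γ i j y) := fun i =>
    diff_of_cd (ContDiff.sum fun j _ => contDiff_const.mul (hc i j)) (by norm_num)
  have hp : ∀ d y, pd d (trT γ) y = ∑ i, ∑ j, eta i j * pd d (γ i j) y := by
    intro d y
    unfold trT
    rw [pd_sum Finset.univ hdixy d y]
    refine Finset.sum_congr rfl fun i _ => ?_
    rw [pd_sum Finset.univ (fun j => diff_of_cd (contDiff_const.mul (hc i j)) (by norm_num)) d y]
    exact Finset.sum_congr rfl fun j _ => pd_const_mul (eta i j) (diff_of_cd (hc i j) (by norm_num)) d y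
  have hpp : ∀ c d, pd c (pd d (trT γ)) x = ∑ i, ∑ j, eta i j * pd c (pd d (γ i j)) x := by
    intro c d
    rw [pd_congr (hp d) c x]
    rw [pd_sum Finset.univ (fun i => diff_of_cd (ContDiff.sum fun j _ =>
      contDiff_const.mul (pd_contDiff' (n := 1) (gamma_cd2 γ hc i j) (by norm_num) d)) le_rfl) c x]
    refine Finset.sum_congr rfl fun i _ => ?_
    rw [pd_sum Finset.univ (fun j => diff_of_cd (contDiff_const.mul
      (pd_contDiff' (n := 1) (gamma_cd2 γ hc i j) (by norm_num) d)) le_rfl) c x]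
    exact Finset.sum_congr rfl fun j _ => pd_const_mul (eta i j)
      (pd_diff (gamma_cd2 γ hc i j) d) c x
  unfold box
  simp only [hpp]
  simp only [Fin.sum_univ_four]
  ring

lemma linE_eq (hsymm : ∀ a b x, γ a b x = γ b a x)
    (hdD : ∀ b x, divTrRev γ b x = 0) (a b : Fin 4) (x : V4) :
    linE γ a b x = (1/4) * eta a b * box (trT γ) x - (1/2) * box (γ a b) x := by
  unfold linE
  rw [keyT1 γ hc hsymm hdD x, keyT2 γ hc hsymm hdD a b x, keyT2 γ hc hsymm hdD b a x,
      pd_comm (trT_cd2 γ hc) b a x]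
  ring

end Gamma

end Stmt3Aux

theorem stmt_3 (γ : Tensor)
    (hsmooth : ∀ a b, ContDiff ℝ (⊤ : ℕ∞) (γ a b))
    (hsymm : ∀ a b x, γ a b x = γ b a x)
    (hdeDonder : ∀ b x, divTrRev γ b x = 0) :
    (∀ a b x, 2 * linE γ a b x = - box (trRev γ a b) x) ∧
    ((∀ a b x, linE γ a b x = 0) ↔ (∀ a b x, box (γ a b) x = 0)) := by
  have hc : ∀ a b, ContDiff ℝ (3:ℕ) (γ a b) := fun a b => (hsmooth a b).of_le (le_trans (by norm_num : (3 : WithTop ℕ∞) ≤ ((3:ℕ∞) : WithTop ℕ∞)) (WithTop.coe_le_coe.mpr le_top))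
  have key1 : ∀ a b x, 2 * linE γ a b x = - box (trRev γ a b) x := by
    intro a b x
    rw [Stmt3Aux.linE_eq γ hc hsymm hdeDonder a b x, Stmt3Aux.boxTrRev_eq γ hc a b x]
    ring
  refine ⟨key1, ?_, ?_⟩
  · intro hL a b x
    have hRev : ∀ a b, box (trRev γ a b) x = 0 := fun a b => by
      have h := key1 a b x; rw [hL a b x] at h; linarith
    have hG : ∀ a b, box (γ a b) x = (1/2) * eta a b * box (trT γ) x := fun a b => by
      have h1 := Stmt3Aux.boxTrRev_eq γ hc a b x
      have h2 := hRev a b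
      linarith
    have hB : box (trT γ) x = 0 := by
      have h := Stmt3Aux.box_trT γ hc x
      simp only [hG] at h
      simp [Fin.sum_univ_four, eta] at h
      linarith
    rw [hG a b, hB]; ring
  · intro hbox a b x
    have hB : box (trT γ) x = 0 := by
      rw [Stmt3Aux.box_trT γ hc x]
      simp [hbox]
    have h := key1 a b x
    rw [Stmt3Aux.boxTrRev_eq γ hc a b x, hbox a b x, hB] at h
    linarith
end
end

section
/- For every smooth symmetric tensor field γ on Minkowski space, the divergence of its conjugate momentum equals the flat linearized Einstein tensor with raised indices: ∂_c Π^{cab}(γ) = L^{ab}(γ) := η^{ac} η^{bd} L_{cd}(γ) for all a,b. (This identity holds for all smooth symmetric γ, not only for solutions of the linearized field equations.) -/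
noncomputable section

/-- Index raising: γ^{ab} = η^{ac} η^{bd} γ_{cd}. -/
def upT (γ : Tensor) : Tensor := fun a b x => ∑ c, ∑ d, eta a c * eta b d * γ c d x

/-- The conjugate momentum
Π^{abc}(γ) = −(1/2)∂^a γ^{bc} + (1/2)η^{bc}∂^a γ − (1/2)η^{bc}∂_d γ^{ad}
             − (1/4)η^{ac}∂^b γ − (1/4)η^{ab}∂^c γ + (1/2)∂^b γ^{ac} + (1/2)∂^c γ^{ab}. -/
def mom (γ : Tensor) (a b c : Fin 4) : (Fin 4 → ℝ) → ℝ := fun x =>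
  -(1/2) * pdUp a (upT γ b c) x + (1/2) * eta b c * pdUp a (trT γ) x
  - (1/2) * eta b c * (∑ d, pd d (upT γ a d) x)
  - (1/4) * eta a c * pdUp b (trT γ) x - (1/4) * eta a b * pdUp c (trT γ) x
  + (1/2) * pdUp b (upT γ a c) x + (1/2) * pdUp c (upT γ a b) x

/-- The flat linearized Einstein tensor with raised indices: L^{ab} = η^{ac}η^{bd} L_{cd}. -/
def linEUp (γ : Tensor) : Tensor := fun a b x => ∑ c, ∑ d, eta a c * eta b d * linE γ c d x

/-!
STATEMENT 6: for every smooth symmetric tensor field γ on Minkowski space, the divergence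
of its conjugate momentum equals the flat linearized Einstein tensor with raised indices:
∂_c Π^{cab}(γ) = L^{ab}(γ) for all a,b (for all smooth symmetric γ, not only solutions).
-/


/-! ### Auxiliary definitions and lemmas -/

/-- The diagonal entries of the Minkowski metric. -/
def eps (a : Fin 4) : ℝ := if a = 0 then -1 else 1

lemma sum_eta_mul (a : Fin 4) (f : Fin 4 → ℝ) : ∑ b, eta a b * f b = eps a * f a := by
  fin_cases a <;> simp [Fin.sum_univ_four, eta, eps]

lemma double_contract (a b : Fin 4) (g : Fin 4 → Fin 4 → ℝ) :
    ∑ c, ∑ d, eta a c * eta b d * g c d = eps a * eps b * g a b := by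
  have h : ∀ c, ∑ d, eta a c * eta b d * g c d = eta a c * (eps b * g c b) := by
    intro c
    rw [← sum_eta_mul b (g c), Finset.mul_sum]
    exact Finset.sum_congr rfl fun d _ => mul_assoc _ _ _
  rw [Finset.sum_congr rfl fun c _ => h c, sum_eta_mul a fun c => eps b * g c b]
  ring

lemma contDiff_pd {f : (Fin 4 → ℝ) → ℝ} (hf : ContDiff ℝ (⊤ : ℕ∞) f) (a : Fin 4) :
    ContDiff ℝ (⊤ : ℕ∞) (pd a f) :=
  (hf.fderiv_right (by simp)).clm_apply contDiff_const

@[fun_prop]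
lemma diff_pd {f : (Fin 4 → ℝ) → ℝ} (hf : ContDiff ℝ (⊤ : ℕ∞) f) (a : Fin 4) :
    Differentiable ℝ (pd a f) :=
  (contDiff_pd hf a).differentiable (by simp)

lemma pd_add {f g : (Fin 4 → ℝ) → ℝ} (hf : Differentiable ℝ f) (hg : Differentiable ℝ g)
    (a : Fin 4) (x : Fin 4 → ℝ) :
    pd a (fun y => f y + g y) x = pd a f x + pd a g x := by
  simp [pd, fderiv_fun_add (hf x) (hg x)]

lemma pd_sub {f g : (Fin 4 → ℝ) → ℝ} (hf : Differentiable ℝ f) (hg : Differentiable ℝ g)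
    (a : Fin 4) (x : Fin 4 → ℝ) :
    pd a (fun y => f y - g y) x = pd a f x - pd a g x := by
  simp [pd, fderiv_fun_sub (hf x) (hg x)]

lemma pd_const_mul {f : (Fin 4 → ℝ) → ℝ} (hf : Differentiable ℝ f) (c : ℝ)
    (a : Fin 4) (x : Fin 4 → ℝ) :
    pd a (fun y => c * f y) x = c * pd a f x := by
  simp [pd, fderiv_const_mul (hf x) c]

lemma pd_sum (F : Fin 4 → (Fin 4 → ℝ) → ℝ) (hF : ∀ i, Differentiable ℝ (F i))
    (a : Fin 4) (x : Fin 4 → ℝ) :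
    pd a (fun y => ∑ i, F i y) x = ∑ i, pd a (F i) x := by
  simp [pd, fderiv_fun_sum (fun i _ => (hF i) x)]

lemma pd_comm {f : (Fin 4 → ℝ) → ℝ} (hf : ContDiff ℝ (⊤ : ℕ∞) f) (a b : Fin 4) (x : Fin 4 → ℝ) :
    pd a (pd b f) x = pd b (pd a f) x := by
  have hdf : Differentiable ℝ (fderiv ℝ f) :=
    (hf.fderiv_right (m := 1) (WithTop.coe_le_coe.mpr le_top)).differentiable one_ne_zero
  have h2 : ∀ v w : Fin 4 → ℝ,
      fderiv ℝ (fun y => fderiv ℝ f y w) x v = fderiv ℝ (fderiv ℝ f) x v w := by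
    intro v w
    rw [fderiv_clm_apply (hdf x) (differentiableAt_const w)]
    simp
  have hsym := second_derivative_symmetric
    (fun y => ((hf.differentiable (by simp)) y).hasFDerivAt) ((hdf x).hasFDerivAt)
  show fderiv ℝ (fun y => fderiv ℝ f y (Pi.single b 1)) x (Pi.single a 1)
      = fderiv ℝ (fun y => fderiv ℝ f y (Pi.single a 1)) x (Pi.single b 1)
  rw [h2, h2, hsym]

lemma pdUp_fun (a : Fin 4) (f : (Fin 4 → ℝ) → ℝ) :
    pdUp a f = fun x => eps a * pd a f x :=
  funext fun x => sum_eta_mul a _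

lemma trT_fun (γ : Tensor) : trT γ = fun x => ∑ i, eps i * γ i i x :=
  funext fun x => Finset.sum_congr rfl fun i _ => sum_eta_mul i _

lemma upT_fun (γ : Tensor) (a b : Fin 4) :
    upT γ a b = fun x => eps a * eps b * γ a b x :=
  funext fun x => double_contract a b _

lemma box_eq (f : (Fin 4 → ℝ) → ℝ) (x : Fin 4 → ℝ) :
    box f x = ∑ e, eps e * pd e (pd e f) x :=
  Finset.sum_congr rfl fun e _ => sum_eta_mul e _

lemma linEUp_eq (γ : Tensor) (a b : Fin 4) (x : Fin 4 → ℝ) :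
    linEUp γ a b x = eps a * eps b * linE γ a b x :=
  double_contract a b _

lemma pd_upT_fun (γ : Tensor) (hs : ∀ i j, ContDiff ℝ (⊤ : ℕ∞) (γ i j)) (e i j : Fin 4) :
    pd e (upT γ i j) = fun x => eps i * eps j * pd e (γ i j) x := by
  funext x
  rw [upT_fun]
  exact pd_const_mul ((hs i j).differentiable (by simp)) _ e x

lemma pd_trT_fun (γ : Tensor) (hs : ∀ i j, ContDiff ℝ (⊤ : ℕ∞) (γ i j)) (e : Fin 4) :
    pd e (trT γ) = fun x => ∑ i, eps i * pd e (γ i i) x := by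
  funext x
  rw [trT_fun]
  rw [pd_sum (fun i y => eps i * γ i i y)
    (fun i => Differentiable.const_mul ((hs i i).differentiable (by simp)) _) e x]
  exact Finset.sum_congr rfl fun i _ =>
    pd_const_mul ((hs i i).differentiable (by simp)) _ e x

set_option maxHeartbeats 2000000 in
theorem stmt_6 (γ : Tensor)
    (hsmooth : ∀ a b, ContDiff ℝ (⊤ : ℕ∞) (γ a b))
    (hsymm : ∀ a b x, γ a b x = γ b a x) :
    ∀ a b x, (∑ c, pd c (mom γ c a b) x) = linEUp γ a b x := by
  intro a b x
  have hγ : ∀ i j, γ i j = γ j i := fun i j => funext fun y => hsymm i j y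
  have Hcomm : ∀ (c d i j : Fin 4), d < c → pd c (pd d (γ i j)) x = pd d (pd c (γ i j)) x :=
    fun c d i j _ => pd_comm (hsmooth i j) c d x
  have Hsym : ∀ (c d i j : Fin 4), j < i → pd c (pd d (γ i j)) x = pd c (pd d (γ j i)) x :=
    fun c d i j _ => by rw [hγ i j]
  unfold mom
  simp only [linEUp_eq, linE, box_eq, pdUp_fun, pd_upT_fun γ hsmooth, pd_trT_fun γ hsmooth]
  simp (disch := fun_prop) only [pd_add, pd_sub, pd_const_mul, pd_sum]
  simp only [Fin.sum_univ_four]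
  have f0 : (⟨0, by omega⟩ : Fin 4) = 0 := rfl
  have f1 : (⟨1, by omega⟩ : Fin 4) = 1 := rfl
  have f2 : (⟨2, by omega⟩ : Fin 4) = 2 := rfl
  have f3 : (⟨3, by omega⟩ : Fin 4) = 3 := rfl
  fin_cases a <;> fin_cases b <;>
    simp only [f0, f1, f2, f3] <;>
    simp (disch := decide) only [Hcomm, Hsym] <;>
    simp (config := { decide := true }) only [eps, eta, ite_true, ite_false] <;> ring
end
end

section
/- The pre-symplectic product of linearized gravity on Minkowski space is independent of the constant-time hyperplane on which it is evaluated: let γ¹ and γ² be smooth symmetric tensor fields on ℝ⁴ (coordinates (t,x) with x ∈ ℝ³) solving the flat linearized Einstein equation L_{ab}(γⁱ) = 0 and spacelike-compactly supported, i.e. there exists R > 0 with γⁱ(t,x) = 0 whenever |x| ≥ R + |t|. Then the function ω(t) := ∫_{ℝ³} ( γ¹_{ab}(t,x) Π^{0ab}(γ²)(t,x) − γ²_{ab}(t,x) Π^{0ab}(γ¹)(t,x) ) d³x is constant in t. -/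
open MeasureTheory
noncomputable section

/-!
STATEMENT 8: the pre-symplectic product of linearized gravity on Minkowski space is
independent of the constant-time hyperplane: if γ¹, γ² are smooth symmetric
spacelike-compactly supported solutions of L_{ab}(γⁱ) = 0, then
ω(t) := ∫_{ℝ³} ( γ¹_{ab}(t,x) Π^{0ab}(γ²)(t,x) − γ²_{ab}(t,x) Π^{0ab}(γ¹)(t,x) ) d³x
is constant in t.  Points of ℝ⁴ are written `Fin.cons t y` with y ∈ ℝ³.
-/

namespace Stmt8

def ee : Fin 4 → ℝ := fun a => if a = 0 then -1 else 1

lemma eta_eq (a b : Fin 4) : eta a b = if a = b then ee a else 0 := by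
  unfold eta ee; rfl

lemma sum_eta (a : Fin 4) (f : Fin 4 → ℝ) : (∑ b, eta a b * f b) = ee a * f a := by
  simp [eta_eq]

variable {f g : (Fin 4 → ℝ) → ℝ} {x : Fin 4 → ℝ}

lemma pd_add (hf : DifferentiableAt ℝ f x) (hg : DifferentiableAt ℝ g x) (a : Fin 4) :
    pd a (fun y => f y + g y) x = pd a f x + pd a g x := by
  simp [pd, fderiv_fun_add hf hg]

lemma pd_sub (hf : DifferentiableAt ℝ f x) (hg : DifferentiableAt ℝ g x) (a : Fin 4) :
    pd a (fun y => f y - g y) x = pd a f x - pd a g x := by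
  simp [pd, fderiv_fun_sub hf hg]

lemma pd_const_mul (hf : DifferentiableAt ℝ f x) (c : ℝ) (a : Fin 4) :
    pd a (fun y => c * f y) x = c * pd a f x := by
  simp [pd, fderiv_const_mul hf c]

lemma pd_mul (hf : DifferentiableAt ℝ f x) (hg : DifferentiableAt ℝ g x) (a : Fin 4) :
    pd a (fun y => f y * g y) x = pd a f x * g x + f x * pd a g x := by
  simp [pd, fderiv_fun_mul hf hg]; ring

lemma pd_sum {ι : Type*} (s : Finset ι) (F : ι → (Fin 4 → ℝ) → ℝ)
    (hF : ∀ i ∈ s, DifferentiableAt ℝ (F i) x) (a : Fin 4) :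
    pd a (fun y => ∑ i ∈ s, F i y) x = ∑ i ∈ s, pd a (F i) x := by
  simp [pd, fderiv_fun_sum hF]

lemma contDiff_pd (hf : ContDiff ℝ (⊤ : ℕ∞) f) (a : Fin 4) : ContDiff ℝ (⊤ : ℕ∞) (pd a f) := by
  exact (hf.fderiv_right ((by simp))).clm_apply contDiff_const

lemma pd_comm (hf : ContDiff ℝ (⊤ : ℕ∞) f) (a b : Fin 4) (x : Fin 4 → ℝ) :
    pd a (pd b f) x = pd b (pd a f) x := by
  have h2 : ContDiffAt ℝ 2 f x := (hf.contDiffAt).of_le (WithTop.coe_le_coe.2 le_top)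
  have hsym := h2.isSymmSndFDerivAt (by norm_num)
  have hd : DifferentiableAt ℝ (fderiv ℝ f) x :=
    ((hf.fderiv_right (m := 1) (WithTop.coe_le_coe.2 le_top)).differentiable (by simp)) x
  have key : ∀ v w : Fin 4 → ℝ,
      fderiv ℝ (fun y => fderiv ℝ f y v) x w = fderiv ℝ (fderiv ℝ f) x w v := by
    intro v w
    rw [fderiv_clm_apply hd (differentiableAt_const v)]
    simp
  have e1 : pd b f = fun y => fderiv ℝ f y (Pi.single b 1) := rfl
  have e2 : pd a f = fun y => fderiv ℝ f y (Pi.single a 1) := rfl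
  show fderiv ℝ (pd b f) x (Pi.single a 1) = fderiv ℝ (pd a f) x (Pi.single b 1)
  rw [e1, e2, key, key, hsym]

end Stmt8
namespace Stmt8

variable {x : Fin 4 → ℝ}

lemma upT_eq (γ : Tensor) (a b : Fin 4) :
    upT γ a b = fun y => ee a * ee b * γ a b y := by
  funext y
  simp only [upT, eta_eq]
  rw [Finset.sum_eq_single a]
  · rw [Finset.sum_eq_single b]
    · simp
    · intro c _ hc; simp [Ne.symm hc]
    · simp
  · intro c _ hc
    rw [Finset.sum_eq_zero]; intros; simp [Ne.symm hc]
  · simp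

lemma trT_eq (γ : Tensor) : trT γ = fun y => ∑ a, ee a * γ a a y := by
  funext y
  simp only [trT]
  congr 1; funext a
  rw [Finset.sum_eq_single a] <;> intros <;> simp_all [eta_eq, Ne.symm]

lemma pdUp_eq (a : Fin 4) (f : (Fin 4 → ℝ) → ℝ) (x : Fin 4 → ℝ) :
    pdUp a f x = ee a * pd a f x := by
  simp only [pdUp]; exact sum_eta a _

section smooth
variable {γ : Tensor} (hγ : ∀ a b, ContDiff ℝ (⊤ : ℕ∞) (γ a b))
include hγ

lemma contDiff_upT (a b : Fin 4) : ContDiff ℝ (⊤ : ℕ∞) (upT γ a b) := by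
  rw [upT_eq]; exact (hγ a b).const_smul (ee a * ee b)

lemma contDiff_trT : ContDiff ℝ (⊤ : ℕ∞) (trT γ) := by
  rw [trT_eq]
  apply ContDiff.sum (fun i _ => (hγ i i).const_smul (ee i))

lemma contDiff_mom (a b c : Fin 4) : ContDiff ℝ (⊤ : ℕ∞) (mom γ a b c) := by
  have hup : ∀ d p q, ContDiff ℝ (⊤ : ℕ∞) (pdUp d (upT γ p q)) := by
    intro d p q
    have : pdUp d (upT γ p q) = fun y => ee d * pd d (upT γ p q) y := by
      funext y; exact pdUp_eq d _ y
    rw [this]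
    exact (contDiff_pd (contDiff_upT hγ p q) d).const_smul (ee d)
  have htr : ∀ d, ContDiff ℝ (⊤ : ℕ∞) (pdUp d (trT γ)) := by
    intro d
    have : pdUp d (trT γ) = fun y => ee d * pd d (trT γ) y := by
      funext y; exact pdUp_eq d _ y
    rw [this]
    exact (contDiff_pd (contDiff_trT hγ) d).const_smul (ee d)
  unfold mom
  refine ((((((ContDiff.add ?_ ?_).sub ?_).sub ?_).sub ?_).add ?_).add ?_)
  · exact contDiff_const.mul (hup a b c)
  · exact contDiff_const.mul (htr a)
  · exact contDiff_const.mul (ContDiff.sum (fun d _ => contDiff_pd (contDiff_upT hγ a d) d))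
  · exact contDiff_const.mul (htr b)
  · exact contDiff_const.mul (htr c)
  · exact contDiff_const.mul (hup b a c)
  · exact contDiff_const.mul (hup c a b)

end smooth

end Stmt8
namespace Stmt8

variable {γ : Tensor} {x : Fin 4 → ℝ}

/-- momF : the conjugate momentum as an explicit linear combination of first derivatives. -/
def momF (P : Fin 4 → Fin 4 → Fin 4 → ℝ) (a b c : Fin 4) : ℝ :=
  (-(1/2)*(ee a*ee b*ee c)) * P a b c
  + (1/2*eta b c) * (∑ i, (ee a * ee i) * P a i i)
  - (1/2*eta b c) * (∑ i, (ee a * ee i) * P i a i)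
  - (1/4*eta a c) * (∑ i, (ee b * ee i) * P b i i)
  - (1/4*eta a b) * (∑ i, (ee c * ee i) * P c i i)
  + (1/2*(ee b * ee a * ee c)) * P b a c
  + (1/2*(ee c * ee a * ee b)) * P c a b

section
variable (hγ : ∀ a b, ContDiff ℝ (⊤ : ℕ∞) (γ a b))
include hγ

lemma diffAt_γ (a b : Fin 4) : DifferentiableAt ℝ (γ a b) x :=
  ((hγ a b).differentiable (by simp)) x

lemma diffAt_pd (d a b : Fin 4) : DifferentiableAt ℝ (pd d (γ a b)) x :=
  ((contDiff_pd (hγ a b) d).differentiable (by simp)) x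

lemma pd_upT (d p q : Fin 4) (x : Fin 4 → ℝ) :
    pd d (upT γ p q) x = (ee p * ee q) * pd d (γ p q) x := by
  rw [upT_eq]
  exact pd_const_mul (diffAt_γ hγ p q) _ d

lemma pd_trT (d : Fin 4) (x : Fin 4 → ℝ) :
    pd d (trT γ) x = ∑ i, ee i * pd d (γ i i) x := by
  rw [trT_eq, pd_sum _ _ (fun i _ => (diffAt_γ hγ i i).const_mul _) d]
  exact Finset.sum_congr rfl fun i _ => pd_const_mul (diffAt_γ hγ i i) _ d

lemma mom_eq (a b c : Fin 4) (x : Fin 4 → ℝ) :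
    mom γ a b c x = momF (fun d p q => pd d (γ p q) x) a b c := by
  unfold mom momF
  simp only [pdUp_eq, pd_upT hγ, pd_trT hγ, Fin.sum_univ_four]
  ring

end

end Stmt8
namespace Stmt8

variable {γ : Tensor} {x : Fin 4 → ℝ}

lemma pd_comb7 {f1 f2 f3 f4 f5 f6 f7 : (Fin 4 → ℝ) → ℝ} (t : Fin 4)
    (h1 : DifferentiableAt ℝ f1 x) (h2 : DifferentiableAt ℝ f2 x)
    (h3 : DifferentiableAt ℝ f3 x) (h4 : DifferentiableAt ℝ f4 x)
    (h5 : DifferentiableAt ℝ f5 x) (h6 : DifferentiableAt ℝ f6 x)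
    (h7 : DifferentiableAt ℝ f7 x) :
    pd t (fun y => f1 y + f2 y - f3 y - f4 y - f5 y + f6 y + f7 y) x
      = pd t f1 x + pd t f2 x - pd t f3 x - pd t f4 x - pd t f5 x + pd t f6 x + pd t f7 x := by
  rw [pd_add (((((h1.fun_add h2).fun_sub h3).fun_sub h4).fun_sub h5).fun_add h6) h7,
    pd_add ((((h1.fun_add h2).fun_sub h3).fun_sub h4).fun_sub h5) h6,
    pd_sub (((h1.fun_add h2).fun_sub h3).fun_sub h4) h5,
    pd_sub ((h1.fun_add h2).fun_sub h3) h4,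
    pd_sub (h1.fun_add h2) h3,
    pd_add h1 h2]

lemma pd_csum (c : ℝ) (w : Fin 4 → ℝ) (F : Fin 4 → (Fin 4 → ℝ) → ℝ)
    (hF : ∀ i, DifferentiableAt ℝ (F i) x) (t : Fin 4) :
    pd t (fun y => c * ∑ i, w i * F i y) x = c * ∑ i, w i * pd t (F i) x := by
  rw [pd_const_mul (DifferentiableAt.fun_sum fun i _ => (hF i).const_mul _) c t,
    pd_sum _ _ (fun i _ => (hF i).const_mul _) t]
  congr 1
  exact Finset.sum_congr rfl fun i _ => pd_const_mul (hF i) _ t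

lemma pd_momF (F : Fin 4 → Fin 4 → Fin 4 → (Fin 4 → ℝ) → ℝ)
    (hF : ∀ d p q, DifferentiableAt ℝ (F d p q) x) (t a b c : Fin 4) :
    pd t (fun y => momF (fun d p q => F d p q y) a b c) x
      = momF (fun d p q => pd t (F d p q) x) a b c := by
  unfold momF
  beta_reduce
  rw [pd_comb7 t ((hF a b c).const_mul _)
    (DifferentiableAt.const_mul (DifferentiableAt.fun_sum fun i _ => (hF a i i).const_mul _) _)
    (DifferentiableAt.const_mul (DifferentiableAt.fun_sum fun i _ => (hF i a i).const_mul _) _)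
    (DifferentiableAt.const_mul (DifferentiableAt.fun_sum fun i _ => (hF b i i).const_mul _) _)
    (DifferentiableAt.const_mul (DifferentiableAt.fun_sum fun i _ => (hF c i i).const_mul _) _)
    ((hF b a c).const_mul _) ((hF c a b).const_mul _),
    pd_const_mul (hF a b c) _ t, pd_const_mul (hF b a c) _ t, pd_const_mul (hF c a b) _ t,
    pd_csum _ _ _ (fun i => hF a i i) t, pd_csum _ _ _ (fun i => hF i a i) t,
    pd_csum _ _ _ (fun i => hF b i i) t, pd_csum _ _ _ (fun i => hF c i i) t]

section
variable (hγ : ∀ a b, ContDiff ℝ (⊤ : ℕ∞) (γ a b))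
include hγ

lemma pd_mom (t a b c : Fin 4) (x : Fin 4 → ℝ) :
    pd t (mom γ a b c) x = momF (fun d p q => pd t (pd d (γ p q)) x) a b c := by
  have key : mom γ a b c = fun y => momF (fun d p q => pd d (γ p q) y) a b c :=
    funext fun y => mom_eq hγ a b c y
  rw [key, pd_momF _ (fun d p q => diffAt_pd hγ d p q) t a b c]

end

end Stmt8
namespace Stmt8

variable {γ : Tensor} {x : Fin 4 → ℝ}

/-- The linearized Einstein operator as an explicit combination of second derivatives. -/
def LF (H : Fin 4 → Fin 4 → Fin 4 → Fin 4 → ℝ) (a b : Fin 4) : ℝ :=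
  -(1/2) * eta a b * ((∑ p, ∑ q, (ee p * ee q) * H p q p q) - (∑ p, ∑ q, (ee p * ee q) * H p p q q))
  - (1/2) * (∑ p, ee p * H p p a b) - (1/2) * (∑ q, ee q * H a b q q)
  + (1/2) * (∑ p, ee p * H p a b p) + (1/2) * (∑ p, ee p * H p b a p)

lemma box_eq (f : (Fin 4 → ℝ) → ℝ) (x : Fin 4 → ℝ) :
    box f x = ∑ p, ee p * pd p (pd p f) x :=
  Finset.sum_congr rfl fun p _ => sum_eta p _

section
variable (hγ : ∀ a b, ContDiff ℝ (⊤ : ℕ∞) (γ a b))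
include hγ

lemma pd_pd_trT (u v : Fin 4) (x : Fin 4 → ℝ) :
    pd u (pd v (trT γ)) x = ∑ i, ee i * pd u (pd v (γ i i)) x := by
  have h : pd v (trT γ) = fun y => ∑ i, ee i * pd v (γ i i) y := funext fun y => pd_trT hγ v y
  rw [h, pd_sum _ _ (fun i _ => (diffAt_pd hγ v i i).const_mul _) u]
  exact Finset.sum_congr rfl fun i _ => pd_const_mul (diffAt_pd hγ v i i) _ u

lemma linE_eq (a b : Fin 4) (x : Fin 4 → ℝ) :
    linE γ a b x = LF (fun u v p q => pd u (pd v (γ p q)) x) a b := by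
  have h1 : ∀ p q : Fin 4, pdUp p (pdUp q (γ p q)) x = (ee p * ee q) * pd p (pd q (γ p q)) x := by
    intro p q
    have h : pdUp q (γ p q) = fun y => ee q * pd q (γ p q) y := funext fun y => pdUp_eq q _ y
    rw [pdUp_eq, h, pd_const_mul (diffAt_pd hγ q p q) _ p]; ring
  unfold linE LF
  simp only [h1]
  simp only [box_eq, pd_pd_trT hγ, pdUp_eq, Fin.sum_univ_four]
  ring

end

end Stmt8
namespace Stmt8

lemma eeV0 : ee 0 = -1 := rfl
lemma eeV1 : ee 1 = 1 := rfl
lemma eeV2 : ee 2 = 1 := rfl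
lemma eeV3 : ee 3 = 1 := rfl

lemma etaV00 : eta 0 0 = -1 := rfl
lemma etaV11 : eta 1 1 = 1 := rfl
lemma etaV22 : eta 2 2 = 1 := rfl
lemma etaV33 : eta 3 3 = 1 := rfl
lemma etaV01 : eta 0 1 = 0 := rfl
lemma etaV02 : eta 0 2 = 0 := rfl
lemma etaV03 : eta 0 3 = 0 := rfl
lemma etaV10 : eta 1 0 = 0 := rfl
lemma etaV12 : eta 1 2 = 0 := rfl
lemma etaV13 : eta 1 3 = 0 := rfl
lemma etaV20 : eta 2 0 = 0 := rfl
lemma etaV21 : eta 2 1 = 0 := rfl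
lemma etaV23 : eta 2 3 = 0 := rfl
lemma etaV30 : eta 3 0 = 0 := rfl
lemma etaV31 : eta 3 1 = 0 := rfl
lemma etaV32 : eta 3 2 = 0 := rfl

set_option maxHeartbeats 2000000 in
lemma alg1 (P1 P2 : Fin 4 → Fin 4 → Fin 4 → ℝ)
    (h1 : ∀ d p q, P1 d p q = P1 d q p) (h2 : ∀ d p q, P2 d p q = P2 d q p) :
    ∑ a, ∑ b, ∑ c, P1 a b c * momF P2 a b c = ∑ a, ∑ b, ∑ c, P2 a b c * momF P1 a b c := by
  unfold momF
  simp only [Fin.sum_univ_four, eeV0, eeV1, eeV2, eeV3, etaV00, etaV11, etaV22, etaV33,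
    etaV01, etaV02, etaV03, etaV10, etaV12, etaV13, etaV20, etaV21, etaV23, etaV30, etaV31,
    etaV32]
  simp only [show ∀ d, P1 d 1 0 = P1 d 0 1 from fun d => (h1 d 0 1).symm,
    show ∀ d, P1 d 2 0 = P1 d 0 2 from fun d => (h1 d 0 2).symm,
    show ∀ d, P1 d 2 1 = P1 d 1 2 from fun d => (h1 d 1 2).symm,
    show ∀ d, P1 d 3 0 = P1 d 0 3 from fun d => (h1 d 0 3).symm,
    show ∀ d, P1 d 3 1 = P1 d 1 3 from fun d => (h1 d 1 3).symm,
    show ∀ d, P1 d 3 2 = P1 d 2 3 from fun d => (h1 d 2 3).symm,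
    show ∀ d, P2 d 1 0 = P2 d 0 1 from fun d => (h2 d 0 1).symm,
    show ∀ d, P2 d 2 0 = P2 d 0 2 from fun d => (h2 d 0 2).symm,
    show ∀ d, P2 d 2 1 = P2 d 1 2 from fun d => (h2 d 1 2).symm,
    show ∀ d, P2 d 3 0 = P2 d 0 3 from fun d => (h2 d 0 3).symm,
    show ∀ d, P2 d 3 1 = P2 d 1 3 from fun d => (h2 d 1 3).symm,
    show ∀ d, P2 d 3 2 = P2 d 2 3 from fun d => (h2 d 2 3).symm]
  ring

end Stmt8
namespace Stmt8

set_option maxHeartbeats 4000000 in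
lemma alg2 (H : Fin 4 → Fin 4 → Fin 4 → Fin 4 → ℝ)
    (hs : ∀ u v p q, H u v p q = H v u p q) (ht : ∀ u v p q, H u v p q = H u v q p)
    (b c : Fin 4) :
    ∑ a, momF (fun d p q => H a d p q) a b c = ee b * ee c * LF H b c := by
  have r1 : ∀ p q, H 1 0 p q = H 0 1 p q := fun p q => (hs 0 1 p q).symm
  have r2 : ∀ p q, H 2 0 p q = H 0 2 p q := fun p q => (hs 0 2 p q).symm
  have r3 : ∀ p q, H 2 1 p q = H 1 2 p q := fun p q => (hs 1 2 p q).symm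
  have r4 : ∀ p q, H 3 0 p q = H 0 3 p q := fun p q => (hs 0 3 p q).symm
  have r5 : ∀ p q, H 3 1 p q = H 1 3 p q := fun p q => (hs 1 3 p q).symm
  have r6 : ∀ p q, H 3 2 p q = H 2 3 p q := fun p q => (hs 2 3 p q).symm
  have t1 : ∀ u v, H u v 1 0 = H u v 0 1 := fun u v => (ht u v 0 1).symm
  have t2 : ∀ u v, H u v 2 0 = H u v 0 2 := fun u v => (ht u v 0 2).symm
  have t3 : ∀ u v, H u v 2 1 = H u v 1 2 := fun u v => (ht u v 1 2).symm
  have t4 : ∀ u v, H u v 3 0 = H u v 0 3 := fun u v => (ht u v 0 3).symm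
  have t5 : ∀ u v, H u v 3 1 = H u v 1 3 := fun u v => (ht u v 1 3).symm
  have t6 : ∀ u v, H u v 3 2 = H u v 2 3 := fun u v => (ht u v 2 3).symm
  have m0 : (⟨0, by norm_num⟩ : Fin 4) = 0 := rfl
  have m1 : (⟨1, by norm_num⟩ : Fin 4) = 1 := rfl
  have m2 : (⟨2, by norm_num⟩ : Fin 4) = 2 := rfl
  have m3 : (⟨3, by norm_num⟩ : Fin 4) = 3 := rfl
  fin_cases b <;> fin_cases c <;>
    (unfold momF LF
     simp only [m0, m1, m2, m3, Fin.sum_univ_four, eeV0, eeV1, eeV2, eeV3, etaV00, etaV11, etaV22, etaV33,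
       etaV01, etaV02, etaV03, etaV10, etaV12, etaV13, etaV20, etaV21, etaV23, etaV30,
       etaV31, etaV32, Fin.isValue]
     simp only [r1, r2, r3, r4, r5, r6, t1, t2, t3, t4, t5, t6]
     ring)

end Stmt8
namespace Stmt8

section
variable {γ γ1 γ2 : Tensor} {x : Fin 4 → ℝ}

lemma diffAt_mom (hγ : ∀ a b, ContDiff ℝ (⊤ : ℕ∞) (γ a b)) (a b c : Fin 4) :
    DifferentiableAt ℝ (mom γ a b c) x :=
  ((contDiff_mom hγ a b c).differentiable (by simp)) x

lemma cross_zero (g : Fin 4 → Fin 4 → ℝ) (hγ : ∀ a b, ContDiff ℝ (⊤ : ℕ∞) (γ a b))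
    (hγsym : ∀ a b x, γ a b x = γ b a x) (hsol : ∀ a b x, linE γ a b x = 0) :
    ∑ a, ∑ b, ∑ c, g b c * momF (fun d p q => pd a (pd d (γ p q)) x) a b c = 0 := by
  have hHs : ∀ u v p q : Fin 4, pd u (pd v (γ p q)) x = pd v (pd u (γ p q)) x :=
    fun u v p q => pd_comm (hγ p q) u v x
  have hHt : ∀ u v p q : Fin 4, pd u (pd v (γ p q)) x = pd u (pd v (γ q p)) x := by
    intro u v p q
    rw [show γ p q = γ q p from funext (hγsym p q)]
  have key := alg2 (fun u v p q => pd u (pd v (γ p q)) x) hHs hHt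
  rw [Finset.sum_comm]
  rw [Finset.sum_congr rfl fun b (_ : b ∈ Finset.univ) => Finset.sum_comm]
  have hz : ∀ b c : Fin 4,
      (∑ a, g b c * momF (fun d p q => pd a (pd d (γ p q)) x) a b c) = 0 := by
    intro b c
    rw [← Finset.mul_sum]
    rw [show (∑ a, momF (fun d p q => pd a (pd d (γ p q)) x) a b c)
        = ee b * ee c * LF (fun u v p q => pd u (pd v (γ p q)) x) b c from key b c]
    rw [← linE_eq hγ b c x, hsol]
    ring
  rw [Finset.sum_congr rfl fun b (_ : b ∈ Finset.univ) =>
    Finset.sum_congr rfl fun c (_ : c ∈ Finset.univ) => hz b c]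
  simp

lemma div_zero (hs1 : ∀ a b, ContDiff ℝ (⊤ : ℕ∞) (γ1 a b)) (hs2 : ∀ a b, ContDiff ℝ (⊤ : ℕ∞) (γ2 a b))
    (hsym1 : ∀ a b x, γ1 a b x = γ1 b a x) (hsym2 : ∀ a b x, γ2 a b x = γ2 b a x)
    (hsol1 : ∀ a b x, linE γ1 a b x = 0) (hsol2 : ∀ a b x, linE γ2 a b x = 0)
    (x : Fin 4 → ℝ) :
    ∑ a, pd a (fun y => ∑ b, ∑ c,
      (γ1 b c y * mom γ2 a b c y - γ2 b c y * mom γ1 a b c y)) x = 0 := by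
  have hterm : ∀ a b c : Fin 4,
      pd a (fun y => γ1 b c y * mom γ2 a b c y - γ2 b c y * mom γ1 a b c y) x
      = (pd a (γ1 b c) x * momF (fun d p q => pd d (γ2 p q) x) a b c
            + γ1 b c x * momF (fun d p q => pd a (pd d (γ2 p q)) x) a b c)
        - (pd a (γ2 b c) x * momF (fun d p q => pd d (γ1 p q) x) a b c
            + γ2 b c x * momF (fun d p q => pd a (pd d (γ1 p q)) x) a b c) := by
    intro a b c
    rw [pd_sub ((diffAt_γ hs1 b c).fun_mul (diffAt_mom hs2 a b c))
        ((diffAt_γ hs2 b c).fun_mul (diffAt_mom hs1 a b c)) a,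
      pd_mul (diffAt_γ hs1 b c) (diffAt_mom hs2 a b c) a,
      pd_mul (diffAt_γ hs2 b c) (diffAt_mom hs1 a b c) a,
      mom_eq hs2 a b c x, mom_eq hs1 a b c x, pd_mom hs2 a a b c x, pd_mom hs1 a a b c x]
  have hexp : ∀ a : Fin 4,
      pd a (fun y => ∑ b, ∑ c, (γ1 b c y * mom γ2 a b c y - γ2 b c y * mom γ1 a b c y)) x
      = ∑ b, ∑ c,
        ((pd a (γ1 b c) x * momF (fun d p q => pd d (γ2 p q) x) a b c
            + γ1 b c x * momF (fun d p q => pd a (pd d (γ2 p q)) x) a b c)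
          - (pd a (γ2 b c) x * momF (fun d p q => pd d (γ1 p q) x) a b c
            + γ2 b c x * momF (fun d p q => pd a (pd d (γ1 p q)) x) a b c)) := by
    intro a
    rw [pd_sum _ _ (fun b _ => DifferentiableAt.fun_sum fun c _ =>
      ((diffAt_γ hs1 b c).fun_mul (diffAt_mom hs2 a b c)).fun_sub
        ((diffAt_γ hs2 b c).fun_mul (diffAt_mom hs1 a b c))) a]
    refine Finset.sum_congr rfl fun b _ => ?_
    rw [pd_sum _ _ (fun c _ =>
      ((diffAt_γ hs1 b c).fun_mul (diffAt_mom hs2 a b c)).fun_sub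
        ((diffAt_γ hs2 b c).fun_mul (diffAt_mom hs1 a b c))) a]
    exact Finset.sum_congr rfl fun c _ => hterm a b c
  rw [Finset.sum_congr rfl fun a (_ : a ∈ Finset.univ) => hexp a]
  have hP1 : ∀ d p q : Fin 4, pd d (γ1 p q) x = pd d (γ1 q p) x := by
    intro d p q; rw [show γ1 p q = γ1 q p from funext (hsym1 p q)]
  have hP2 : ∀ d p q : Fin 4, pd d (γ2 p q) x = pd d (γ2 q p) x := by
    intro d p q; rw [show γ2 p q = γ2 q p from funext (hsym2 p q)]
  have A := alg1 (fun d p q => pd d (γ1 p q) x) (fun d p q => pd d (γ2 p q) x) hP1 hP2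
  have B := cross_zero (γ := γ2) (x := x) (fun b c => γ1 b c x) hs2 hsym2 hsol2
  have C := cross_zero (γ := γ1) (x := x) (fun b c => γ2 b c x) hs1 hsym1 hsol1
  simp only [Finset.sum_sub_distrib, Finset.sum_add_distrib]
  beta_reduce at A B C ⊢
  linarith [A, B, C]

end

end Stmt8
namespace Stmt8

/-- The symplectic current. -/
def Wc (γ1 γ2 : Tensor) (a : Fin 4) (y : Fin 4 → ℝ) : ℝ :=
  ∑ b, ∑ c, (γ1 b c y * mom γ2 a b c y - γ2 b c y * mom γ1 a b c y)

section
variable {γ1 γ2 : Tensor}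
variable (hs1 : ∀ a b, ContDiff ℝ (⊤ : ℕ∞) (γ1 a b)) (hs2 : ∀ a b, ContDiff ℝ (⊤ : ℕ∞) (γ2 a b))

lemma Wc_split (a : Fin 4) (y : Fin 4 → ℝ) :
    Wc γ1 γ2 a y = (∑ b, ∑ c, γ1 b c y * mom γ2 a b c y)
      - ∑ b, ∑ c, γ2 b c y * mom γ1 a b c y := by
  unfold Wc
  rw [← Finset.sum_sub_distrib]
  exact Finset.sum_congr rfl fun b _ => Finset.sum_sub_distrib _ _

lemma Wc_vanish (a : Fin 4) (y : Fin 4 → ℝ)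
    (h1 : ∀ p q, γ1 p q y = 0) (h2 : ∀ p q, γ2 p q y = 0) :
    Wc γ1 γ2 a y = 0 := by
  unfold Wc
  refine Finset.sum_eq_zero fun b _ => Finset.sum_eq_zero fun c _ => ?_
  rw [h1 b c, h2 b c]; ring

include hs1 hs2 in
lemma contDiff_Wc (a : Fin 4) : ContDiff ℝ (⊤ : ℕ∞) (Wc γ1 γ2 a) := by
  unfold Wc
  refine ContDiff.sum fun b _ => ContDiff.sum fun c _ => ContDiff.sub ?_ ?_
  · exact (hs1 b c).mul (contDiff_mom hs2 a b c)
  · exact (hs2 b c).mul (contDiff_mom hs1 a b c)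

include hs1 hs2 in
lemma div_Wc (hsym1 : ∀ a b x, γ1 a b x = γ1 b a x) (hsym2 : ∀ a b x, γ2 a b x = γ2 b a x)
    (hsol1 : ∀ a b x, linE γ1 a b x = 0) (hsol2 : ∀ a b x, linE γ2 a b x = 0)
    (y : Fin 4 → ℝ) :
    ∑ a, pd a (Wc γ1 γ2 a) y = 0 :=
  div_zero hs1 hs2 hsym1 hsym2 hsol1 hsol2 y

end

end Stmt8
open Stmt8 in
theorem stmt_8 (γ1 γ2 : Tensor)
    (hsmooth1 : ∀ a b, ContDiff ℝ (⊤ : ℕ∞) (γ1 a b))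
    (hsmooth2 : ∀ a b, ContDiff ℝ (⊤ : ℕ∞) (γ2 a b))
    (hsymm1 : ∀ a b x, γ1 a b x = γ1 b a x)
    (hsymm2 : ∀ a b x, γ2 a b x = γ2 b a x)
    (hsol1 : ∀ a b x, linE γ1 a b x = 0)
    (hsol2 : ∀ a b x, linE γ2 a b x = 0)
    -- spacelike-compact support: γⁱ(t,x) = 0 whenever |x| ≥ R + |t|
    (hsc : ∃ R : ℝ, 0 < R ∧ ∀ (t : ℝ) (y : Fin 3 → ℝ),
      R + |t| ≤ Real.sqrt (∑ i, (y i)^2) →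
        ∀ a b, γ1 a b (Fin.cons t y) = 0 ∧ γ2 a b (Fin.cons t y) = 0) :
    ∀ s t : ℝ,
      (∫ y : Fin 3 → ℝ,
        ((∑ a, ∑ b, γ1 a b (Fin.cons s y) * mom γ2 0 a b (Fin.cons s y))
          - ∑ a, ∑ b, γ2 a b (Fin.cons s y) * mom γ1 0 a b (Fin.cons s y)))
      = ∫ y : Fin 3 → ℝ,
        ((∑ a, ∑ b, γ1 a b (Fin.cons t y) * mom γ2 0 a b (Fin.cons t y))
          - ∑ a, ∑ b, γ2 a b (Fin.cons t y) * mom γ1 0 a b (Fin.cons t y)) := by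
  obtain ⟨R, hR0, hRv⟩ := hsc
  have hvan0 : ∀ (t' : ℝ) (y : Fin 3 → ℝ), R + |t'| ≤ Real.sqrt (∑ i, (y i)^2) →
      ∀ a, Wc γ1 γ2 a (Fin.cons t' y) = 0 := fun t' y h a =>
    Wc_vanish a _ (fun p q => (hRv t' y h p q).1) (fun p q => (hRv t' y h p q).2)
  have hdiff : ∀ i, Differentiable ℝ (Wc γ1 γ2 i) := fun i =>
    (contDiff_Wc hsmooth1 hsmooth2 i).differentiable (by simp)
  suffices key : ∀ s t : ℝ, s ≤ t →
      (∫ y : Fin 3 → ℝ, Wc γ1 γ2 0 (Fin.cons s y))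
        = ∫ y : Fin 3 → ℝ, Wc γ1 γ2 0 (Fin.cons t y) by
    have hgoal : ∀ s : ℝ, (∫ y : Fin 3 → ℝ,
        ((∑ a, ∑ b, γ1 a b (Fin.cons s y) * mom γ2 0 a b (Fin.cons s y))
          - ∑ a, ∑ b, γ2 a b (Fin.cons s y) * mom γ1 0 a b (Fin.cons s y)))
        = ∫ y : Fin 3 → ℝ, Wc γ1 γ2 0 (Fin.cons s y) := by
      intro s
      congr 1
      funext y
      rw [Wc_split]
    intro s t
    rcases le_total s t with h | h
    · rw [hgoal s, hgoal t, key s t h]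
    · rw [hgoal s, hgoal t, key t s h]
  intro s t hst
  set M : ℝ := R + |s| + |t| + 1 with hM
  have hMpos : 0 < M := by
    have := abs_nonneg s; have := abs_nonneg t; simp only [hM]; linarith
  set A : Fin 4 → ℝ := (fun i => if i = 0 then s else -M) with hA
  set B : Fin 4 → ℝ := (fun i => if i = 0 then t else M) with hB
  have hAB : A ≤ B := by
    intro i
    simp only [hA, hB]
    by_cases h : i = 0
    · simp [h, hst]
    · simp only [h, if_false]; linarith
  set F : (Fin 4 → ℝ) → (Fin 4 → ℝ) := (fun y i => Wc γ1 γ2 i y) with hF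
  set F' : (Fin 4 → ℝ) → (Fin 4 → ℝ) →L[ℝ] (Fin 4 → ℝ) :=
    (fun y => ContinuousLinearMap.pi (fun i => fderiv ℝ (Wc γ1 γ2 i) y)) with hF'
  have Hd : ∀ y : Fin 4 → ℝ, HasFDerivAt F (F' y) y := by
    intro y
    simp only [hF, hF']
    exact hasFDerivAt_pi.2 fun i => ((hdiff i) y).hasFDerivAt
  have Hc : ContinuousOn F (Set.Icc A B) :=
    (continuous_pi fun i => ((hdiff i).continuous)).continuousOn
  have hdivF : ∀ y : Fin 4 → ℝ, (∑ i, F' y (Pi.single i 1) i) = 0 := by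
    intro y
    have h1 : ∀ i : Fin 4, F' y (Pi.single i 1) i = pd i (Wc γ1 γ2 i) y := by
      intro i; simp only [hF']; rfl
    rw [Finset.sum_congr rfl fun i _ => h1 i]
    exact div_Wc hsmooth1 hsmooth2 hsymm1 hsymm2 hsol1 hsol2 y
  have hzero : (fun y : Fin 4 → ℝ => ∑ i, F' y (Pi.single i 1) i) = fun _ => (0:ℝ) :=
    funext hdivF
  have Hi : MeasureTheory.IntegrableOn (fun y : Fin 4 → ℝ => ∑ i, F' y (Pi.single i 1) i)
      (Set.Icc A B) := by
    rw [hzero]; exact MeasureTheory.integrableOn_zero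
  have hbox := MeasureTheory.integral_divergence_of_hasFDerivAt_off_countable A B hAB F F'
    ∅ Set.countable_empty Hc (fun y _ => Hd y) Hi
  rw [hzero] at hbox
  simp only [MeasureTheory.integral_zero] at hbox
  rw [Fin.sum_univ_four] at hbox
  -- bound on times within the box
  have habs : ∀ t' : ℝ, s ≤ t' → t' ≤ t → R + |t'| + 1 ≤ M := by
    intro t' h1 h2
    have h3 : t' ≤ |s| + |t| := le_trans h2 (le_trans (le_abs_self t)
      (le_add_of_nonneg_left (abs_nonneg s)))
    have h4 : -(|s| + |t|) ≤ t' := by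
      have := neg_abs_le s
      have := abs_nonneg t
      linarith
    have h5 : |t'| ≤ |s| + |t| := abs_le.2 ⟨h4, h3⟩
    simp only [hM]; linarith
  -- vanishing on spatial faces
  have hface : ∀ (i : Fin 4) (j : Fin 3), i.succAbove 0 = 0 → j.succ = i →
      ∀ v : ℝ, M ≤ |v| → ∀ x ∈ Set.Icc (A ∘ i.succAbove) (B ∘ i.succAbove),
        F (i.insertNth v x) i = 0 := by
    intro i j hi0 hji v hv x hx
    set z : Fin 4 → ℝ := Fin.insertNth (α := fun _ : Fin 4 => ℝ) i v x with hzdef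
    have hz0 : z 0 = x 0 := by
      have h := Fin.insertNth_apply_succAbove (α := fun _ : Fin 4 => ℝ) i v x 0
      rwa [hi0] at h
    have hx0l : s ≤ x 0 := by
      have h := (Pi.le_def.1 hx.1) 0
      simp only [Function.comp_apply, hi0, hA] at h
      simpa using h
    have hx0u : x 0 ≤ t := by
      have h := (Pi.le_def.1 hx.2) 0
      simp only [Function.comp_apply, hi0, hB] at h
      simpa using h
    have hzi : Fin.tail z j = v := by
      show z j.succ = v
      rw [hji, hzdef]
      exact Fin.insertNth_apply_same (α := fun _ : Fin 4 => ℝ) i v x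
    have hsq : M ≤ Real.sqrt (∑ k, (Fin.tail z k)^2) := by
      have h1 : v^2 ≤ ∑ k, (Fin.tail z k)^2 := by
        have := Finset.single_le_sum
          (f := fun k => (Fin.tail z k)^2)
          (fun k _ => sq_nonneg _) (Finset.mem_univ j)
        simpa only [hzi] using this
      calc M ≤ |v| := hv
        _ = Real.sqrt (v^2) := (Real.sqrt_sq_eq_abs v).symm
        _ ≤ _ := Real.sqrt_le_sqrt h1
    have hhead : R + |z 0| ≤ M := by
      have := habs (x 0) hx0l hx0u
      rw [hz0]; linarith
    show Wc γ1 γ2 i z = 0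
    rw [show z = Fin.cons (z 0) (Fin.tail z) from (Fin.cons_self_tail _).symm]
    exact hvan0 _ _ (le_trans hhead hsq) i
  have hBnot0 : ∀ i : Fin 4, i ≠ 0 → B i = M := by
    intro i hi; simp only [hB, hi, if_false]
  have hAnot0 : ∀ i : Fin 4, i ≠ 0 → A i = -M := by
    intro i hi; simp only [hA, hi, if_false]
  have hfaceInt : ∀ (i : Fin 4) (j : Fin 3), i.succAbove 0 = 0 → j.succ = i → ∀ v : ℝ, M ≤ |v| →
      (∫ x in Set.Icc (A ∘ i.succAbove) (B ∘ i.succAbove), F (i.insertNth v x) i) = 0 := by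
    intro i j hi0 hji v hv
    rw [MeasureTheory.setIntegral_congr_fun measurableSet_Icc
      (fun x hx => hface i j hi0 hji v hv x hx)]
    exact MeasureTheory.integral_zero _ _
  have hMabs : M ≤ |M| := le_abs_self M
  have hMabs' : M ≤ |-M| := by rw [abs_neg]; exact le_abs_self M
  have hf1 : (∫ x in Set.Icc (A ∘ Fin.succAbove 1) (B ∘ Fin.succAbove 1),
      F (Fin.insertNth 1 (B 1) x) 1) = 0 := by
    rw [hBnot0 1 (by decide)]
    exact hfaceInt 1 0 (by decide) (by decide) M hMabs
  have hb1 : (∫ x in Set.Icc (A ∘ Fin.succAbove 1) (B ∘ Fin.succAbove 1),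
      F (Fin.insertNth 1 (A 1) x) 1) = 0 := by
    rw [hAnot0 1 (by decide)]
    exact hfaceInt 1 0 (by decide) (by decide) (-M) hMabs'
  have hf2 : (∫ x in Set.Icc (A ∘ Fin.succAbove 2) (B ∘ Fin.succAbove 2),
      F (Fin.insertNth 2 (B 2) x) 2) = 0 := by
    rw [hBnot0 2 (by decide)]
    exact hfaceInt 2 1 (by decide) (by decide) M hMabs
  have hb2 : (∫ x in Set.Icc (A ∘ Fin.succAbove 2) (B ∘ Fin.succAbove 2),
      F (Fin.insertNth 2 (A 2) x) 2) = 0 := by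
    rw [hAnot0 2 (by decide)]
    exact hfaceInt 2 1 (by decide) (by decide) (-M) hMabs'
  have hf3 : (∫ x in Set.Icc (A ∘ Fin.succAbove 3) (B ∘ Fin.succAbove 3),
      F (Fin.insertNth 3 (B 3) x) 3) = 0 := by
    rw [hBnot0 3 (by decide)]
    exact hfaceInt 3 2 (by decide) (by decide) M hMabs
  have hb3 : (∫ x in Set.Icc (A ∘ Fin.succAbove 3) (B ∘ Fin.succAbove 3),
      F (Fin.insertNth 3 (A 3) x) 3) = 0 := by
    rw [hAnot0 3 (by decide)]
    exact hfaceInt 3 2 (by decide) (by decide) (-M) hMabs'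
  rw [hf1, hb1, hf2, hb2, hf3, hb3] at hbox
  -- the time faces
  have hA0 : A 0 = s := by simp [hA]
  have hB0 : B 0 = t := by simp [hB]
  have hcompA : (A ∘ Fin.succAbove 0) = (fun _ : Fin 3 => -M) := by
    funext j
    simp [hA, Fin.succAbove, Fin.succ_ne_zero]
  have hcompB : (B ∘ Fin.succAbove 0) = (fun _ : Fin 3 => M) := by
    funext j
    simp [hB, Fin.succAbove, Fin.succ_ne_zero]
  have hins0 : ∀ (v : ℝ) (x : Fin 3 → ℝ),
      Fin.insertNth (α := fun _ : Fin 4 => ℝ) 0 v x = Fin.cons v x := by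
    intro v x; exact Fin.insertNth_zero' v x
  rw [hA0, hB0, hcompA, hcompB] at hbox
  simp only [hins0] at hbox
  have hboxF : ∀ v : ℝ, (∫ x in Set.Icc (fun _ : Fin 3 => -M) (fun _ : Fin 3 => M),
      F (Fin.cons v x) 0) = ∫ x in Set.Icc (fun _ : Fin 3 => -M) (fun _ : Fin 3 => M),
      Wc γ1 γ2 0 (Fin.cons v x) := by
    intro v; rfl
  rw [hboxF t, hboxF s] at hbox
  -- restrict whole-space integrals to the box
  have hsupp : ∀ t' : ℝ, R + |t'| ≤ M →
      (∫ y : Fin 3 → ℝ, Wc γ1 γ2 0 (Fin.cons t' y))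
      = ∫ y in Set.Icc (fun _ : Fin 3 => -M) (fun _ : Fin 3 => M), Wc γ1 γ2 0 (Fin.cons t' y) := by
    intro t' ht'
    symm
    apply MeasureTheory.setIntegral_eq_integral_of_forall_compl_eq_zero
    intro y hy
    have hex : ∃ j, M < |y j| := by
      by_contra hcon
      push_neg at hcon
      refine hy ⟨Pi.le_def.2 fun j => ?_, Pi.le_def.2 fun j => ?_⟩
      · have := (abs_le.1 (hcon j)).1; linarith
      · exact (abs_le.1 (hcon j)).2
    obtain ⟨j, hj⟩ := hex
    apply hvan0
    have h1 : |y j| ≤ Real.sqrt (∑ k, (y k)^2) := by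
      rw [← Real.sqrt_sq_eq_abs]
      exact Real.sqrt_le_sqrt (Finset.single_le_sum
        (f := fun k => (y k)^2) (fun k _ => sq_nonneg _) (Finset.mem_univ j))
    linarith
  have hMs : R + |s| ≤ M := by
    have := abs_nonneg t; simp only [hM]; linarith
  have hMt : R + |t| ≤ M := by
    have := abs_nonneg s; simp only [hM]; linarith
  rw [hsupp s hMs, hsupp t hMt]
  linarith [hbox]
end
end
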